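/- Let κ = (ξ,η) be a quaternionic spinor. Then there exists (α,β) ∈ ℍ² such that exactly one of the two quaternions αξ + βη and αη' − βξ' is zero. -/

import Mathlib

open Quaternion

noncomputable section

/-- The involution `q* = a + bi + cj - dk` on quaternions (Clifford reversion). -/
def qstar (q : ℍ[ℝ]) : ℍ[ℝ] := ⟨q.re, q.imI, q.imJ, -q.imK⟩

/-- The involution `q' = a - bi - cj + dk` on quaternions. -/
def qprime (q : ℍ[ℝ]) : ℍ[ℝ] := ⟨q.re, -q.imI, -q.imJ, q.imK⟩

/-- A paravector is an element of `ℝ + ℝi + ℝj`, i.e. a quaternion with zero `k`-component. -/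
def IsParavector (q : ℍ[ℝ]) : Prop := q.imK = 0

/-- The quaternion `k`. -/
def qk : ℍ[ℝ] := ⟨0, 0, 0, 1⟩

/-- A quaternionic spinor: a pair `(ξ, η) ≠ (0,0)` with `ξ * conj η` a paravector. -/
def IsSpinor (κ : ℍ[ℝ] × ℍ[ℝ]) : Prop := κ ≠ 0 ∧ IsParavector (κ.1 * star κ.2)

/-- The bracket `{κ₁, κ₂} = ξ₁* η₂ − η₁* ξ₂`. -/
def bracket (κ₁ κ₂ : ℍ[ℝ] × ℍ[ℝ]) : ℍ[ℝ] := qstar κ₁.1 * κ₂.2 - qstar κ₁.2 * κ₂.1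

/-- Right multiplication `κ x = (ξ x, η x)`. -/
def rmul (κ : ℍ[ℝ] × ℍ[ℝ]) (x : ℍ[ℝ]) : ℍ[ℝ] × ℍ[ℝ] := (κ.1 * x, κ.2 * x)

/-- The complementary pair `κ̌ = (η', −ξ')`. -/
def qcheck (κ : ℍ[ℝ] × ℍ[ℝ]) : ℍ[ℝ] × ℍ[ℝ] := (qprime κ.2, -qprime κ.1)

/-- The real inner product on `ℍ²`: `⟨κ₁, κ₂⟩ = Re (ξ₁ ξ̄₂ + η₁ η̄₂)`. -/
def qinner (κ₁ κ₂ : ℍ[ℝ] × ℍ[ℝ]) : ℝ := (κ₁.1 * star κ₂.1 + κ₁.2 * star κ₂.2).re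

/-- The squared norm `|κ|² = |ξ|² + |η|²` on `ℍ²`. -/
def qnsq (κ : ℍ[ℝ] × ℍ[ℝ]) : ℝ := Quaternion.normSq κ.1 + Quaternion.normSq κ.2

/-!
For `ξ ≠ 0` the row `(α, β) = (-η ξ̄, |ξ|²)` annihilates `κ`. Applying the automorphism
`q ↦ q'` to its product with `κ̌` and using `η' ξ* = ξ η̄` (the spinor condition) shows that
this product is `-(|ξ|² + |η|²) ξ'`, which is nonzero. For `ξ = 0` the row `(1, 0)` works.
-/

lemma qprime_mul (a b : ℍ[ℝ]) : qprime (a * b) = qprime a * qprime b := by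
  ext <;> simp only [re_mul, imI_mul, imJ_mul, imK_mul] <;> simp [qprime] <;> ring

lemma qprime_sub (a b : ℍ[ℝ]) : qprime (a - b) = qprime a - qprime b := by
  ext <;> simp only [re_sub, imI_sub, imJ_sub, imK_sub] <;> simp [qprime] <;> ring

lemma qprime_neg (a : ℍ[ℝ]) : qprime (-a) = -qprime a := by
  ext <;> simp only [re_neg, imI_neg, imJ_neg, imK_neg] <;> simp [qprime]

lemma qprime_coe (r : ℝ) : qprime (r : ℍ[ℝ]) = r := by
  ext <;> simp [qprime]

lemma qprime_qprime (a : ℍ[ℝ]) : qprime (qprime a) = a := by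
  ext <;> simp [qprime]

lemma qprime_injective : Function.Injective qprime :=
  Function.LeftInverse.injective qprime_qprime

@[simp]
lemma qprime_eq_zero {a : ℍ[ℝ]} : qprime a = 0 ↔ a = 0 := by
  rw [← qprime_injective.eq_iff, qprime_qprime, show qprime 0 = 0 by ext <;> simp [qprime]]

lemma qprime_star (a : ℍ[ℝ]) : qprime (star a) = qstar a := by
  ext <;> simp [qprime, qstar]

lemma qstar_eq_self_of_isParavector {q : ℍ[ℝ]} (hq : IsParavector q) : qstar q = q := by
  have hk : q.imK = 0 := hq
  ext <;> simp [qstar, hk]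

lemma qprime_mul_qstar_of_isParavector {ξ η : ℍ[ℝ]} (h : IsParavector (ξ * star η)) :
    qprime η * qstar ξ = ξ * star η := by
  rw [← qprime_star, ← qprime_mul, ← star_star η, ← star_mul, qprime_star, star_star,
    qstar_eq_self_of_isParavector h]

lemma neg_mul_star_mul_add_normSq_mul (ξ η : ℍ[ℝ]) :
    -(η * star ξ) * ξ + ((normSq ξ : ℝ) : ℍ[ℝ]) * η = 0 := by
  rw [neg_mul, mul_assoc, star_mul_self, coe_commutes, neg_add_cancel]

lemma neg_mul_star_mul_qprime_sub_normSq_mul_qprime {ξ η : ℍ[ℝ]}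
    (h : IsParavector (ξ * star η)) :
    -(η * star ξ) * qprime η - ((normSq ξ : ℝ) : ℍ[ℝ]) * qprime ξ
      = -((qnsq (ξ, η) : ℍ[ℝ]) * qprime ξ) := by
  apply qprime_injective
  simp only [qprime_sub, qprime_neg, qprime_mul, qprime_coe, qprime_qprime, qprime_star,
    qprime_mul_qstar_of_isParavector h]
  dsimp only [qnsq]
  rw [neg_mul, mul_assoc, star_mul_self, ← coe_commutes (normSq η : ℝ), coe_add, add_mul]
  abel

lemma qnsq_ne_zero {κ : ℍ[ℝ] × ℍ[ℝ]} (hκ : κ ≠ 0) : qnsq κ ≠ 0 := by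
  obtain ⟨ξ, η⟩ := κ
  contrapose! hκ
  rw [qnsq, add_eq_zero_iff_of_nonneg normSq_nonneg normSq_nonneg, normSq_eq_zero,
    normSq_eq_zero] at hκ
  exact Prod.ext hκ.1 hκ.2

/-- For a quaternionic spinor `κ = (ξ,η)`, there is a row vector `(α,β)` such that
exactly one of `αξ + βη` and `αη' − βξ'` is zero. -/
theorem factorisation_fact (ξ η : ℍ[ℝ]) (h : IsSpinor (ξ, η)) :
    ∃ α β : ℍ[ℝ], Xor' (α * ξ + β * η = 0) (α * qprime η - β * qprime ξ = 0) := by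
  obtain ⟨hκ, hpar⟩ := h
  by_cases hξ : ξ = 0
  · subst hξ
    have hη : η ≠ 0 := by simpa using hκ
    exact ⟨1, 0, Or.inl ⟨by simp, by simpa using hη⟩⟩
  · refine ⟨-(η * star ξ), (normSq ξ : ℝ), Or.inl ⟨neg_mul_star_mul_add_normSq_mul ξ η, ?_⟩⟩
    rw [neg_mul_star_mul_qprime_sub_normSq_mul_qprime hpar, neg_eq_zero]
    have hκ' : (qnsq (ξ, η) : ℍ[ℝ]) ≠ 0 := by
      rw [Ne, ← coe_zero, coe_inj]
      exact qnsq_ne_zero hκ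
    exact mul_ne_zero hκ' (qprime_eq_zero.not.2 hξ)
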